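/- Consider the Watts–Strogatz mean-field system with inertia δ = 0. Suppose the Case-3 condition holds: p·(α+β)·(1−r) > α and p·(α+β)·r < α. Let c be a real number with 0 ≤ c < 1/2. Then every solution θ = (θ^B, θ^R) of the system on [0, ∞) with θ^B(0) = θ^R(0) = c satisfies θ(t) → (0, 1) as t → ∞ (party-line polarization, with the blue group fully adopting the initially more popular choice and the red group adopting the other choice). -/

import Mathlib

/-!
While `θ^B < 1/2` and `θ^B ≤ θ^R`, the Case-3 inequalities force `g^B < 0 < g^R`, so the system
decouples into `θ^B' = -θ^B`, `θ^R' = 1 - θ^R`. From `(c, c)` these give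
`(c e^{-t}, 1 - (1 - c) e^{-t})`, which never leaves that region. By continuous induction on
`[0, ∞)` every solution agrees with it: at a time where they agree the signs of `g^B, g^R` persist
on a short interval to the right, on which the decoupled linear equations have unique solutions.
-/

open Set Filter

/-- `g^B(θ) = α(1−pr)(2θ^B−1) − βpr(2θ^R−1)`. -/
noncomputable def gB (α β p r θB θR : ℝ) : ℝ :=
  α * (1 - p * r) * (2 * θB - 1) - β * p * r * (2 * θR - 1)

/-- `g^R(θ) = α(1−p(1−r))(2θ^R−1) − β(1−r)p(2θ^B−1)`. -/
noncomputable def gR (α β p r θB θR : ℝ) : ℝ :=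
  α * (1 - p * (1 - r)) * (2 * θR - 1) - β * (1 - r) * p * (2 * θB - 1)

/-- Right-hand side of the blue equation:
`(1−θ^B)·𝟙[g^B(θ) > 0] − θ^B·𝟙[g^B(θ) < 0]`. -/
noncomputable def rhsB (α β p r θB θR : ℝ) : ℝ :=
  (1 - θB) * (if 0 < gB α β p r θB θR then 1 else 0)
    - θB * (if gB α β p r θB θR < 0 then 1 else 0)

/-- Right-hand side of the red equation:
`(1−θ^R)·𝟙[g^R(θ) > 0] − θ^R·𝟙[g^R(θ) < 0]`. -/
noncomputable def rhsR (α β p r θB θR : ℝ) : ℝ :=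
  (1 - θR) * (if 0 < gR α β p r θB θR then 1 else 0)
    - θR * (if gR α β p r θB θR < 0 then 1 else 0)

/-- `θ = (θ^B, θ^R)` is a solution of the Watts–Strogatz mean-field system
(with inertia `δ = 0`) on the set `J`: it is differentiable on `J` and satisfies
the two differential equations at every `t ∈ J`. -/
def IsWSSolutionOn (α β p r : ℝ) (θB θR : ℝ → ℝ) (J : Set ℝ) : Prop :=
  ∀ t ∈ J,
    HasDerivWithinAt θB (rhsB α β p r (θB t) (θR t)) J t ∧
    HasDerivWithinAt θR (rhsR α β p r (θB t) (θR t)) J t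

open Topology Real

/-- The solution of `f' = k - f` with `f 0 = c`. -/
noncomputable def relax (k c t : ℝ) : ℝ := k - (k - c) * exp (-t)

lemma relax_zero (k c : ℝ) : relax k c 0 = c := by simp [relax]

lemma continuous_relax (k c : ℝ) : Continuous (relax k c) := by
  unfold relax; fun_prop

lemma tendsto_relax_atTop (k c : ℝ) : Tendsto (relax k c) atTop (𝓝 k) := by
  have := tendsto_const_nhds (x := k) |>.sub (tendsto_exp_neg_atTop_nhds_zero.const_mul (k - c))
  rwa [mul_zero, sub_zero] at this

lemma relax_zero_lt_half {c t : ℝ} (hc : c < 1 / 2) (ht : 0 ≤ t) : relax 0 c t < 1 / 2 := by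
  have h1 : exp (-t) ≤ 1 := exp_le_one_iff.2 (neg_nonpos.2 ht)
  have h2 : (c - 1 / 2) * exp (-t) < 0 := mul_neg_of_neg_of_pos (by linarith) (exp_pos _)
  unfold relax; linarith

lemma relax_zero_le_relax_one {c t : ℝ} (ht : 0 ≤ t) : relax 0 c t ≤ relax 1 c t := by
  have : exp (-t) ≤ 1 := exp_le_one_iff.2 (neg_nonpos.2 ht)
  unfold relax; linarith

lemma eqOn_relax_of_hasDerivWithinAt {f : ℝ → ℝ} {k c a b : ℝ}
    (hf : ContinuousOn f (Icc a b))
    (hf' : ∀ x ∈ Ico a b, HasDerivWithinAt f (k - f x) (Ici x) x) (ha : f a = relax k c a) :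
    EqOn f (relax k c) (Icc a b) := by
  have hconst := constant_of_has_deriv_right_zero (f := fun x => (f x - k) * exp x)
    ((hf.sub continuousOn_const).mul continuous_exp.continuousOn) fun x hx => by
      have h := ((hf' x hx).sub_const k).mul (hasDerivAt_exp x).hasDerivWithinAt
      rwa [show (k - f x) * exp x + (f x - k) * exp x = 0 by ring] at h
  intro x hx
  have hfx : (f x - k) * exp x = -(k - c) := by
    rw [hconst x hx, ha, relax, exp_neg]; field_simp; ring
  rw [relax, exp_neg]
  field_simp
  linarith

lemma gB_neg_of_lt_half_of_le {α β p r x y : ℝ} (hβ : 0 ≤ β) (hp : 0 ≤ p) (hr : 0 ≤ r)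
    (h : p * (α + β) * r < α) (hx : x < 1 / 2) (hxy : x ≤ y) : gB α β p r x y < 0 := by
  have : 0 ≤ β * p * r * (y - x) := by have := sub_nonneg.2 hxy; positivity
  unfold gB; nlinarith

lemma gR_pos_of_lt_half_of_le {α β p r x y : ℝ} (hα : 0 ≤ α) (hp : 0 ≤ p) (hp1 : p ≤ 1)
    (hr : 0 ≤ r) (h : α < p * (α + β) * (1 - r)) (hx : x < 1 / 2) (hxy : x ≤ y) :
    0 < gR α β p r x y := by
  have : 0 ≤ 1 - p * (1 - r) := by nlinarith
  have : 0 ≤ α * (1 - p * (1 - r)) * (y - x) := by have := sub_nonneg.2 hxy; positivity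
  unfold gR; nlinarith

lemma rhsB_of_gB_neg {α β p r x y : ℝ} (h : gB α β p r x y < 0) :
    rhsB α β p r x y = -x := by
  rw [rhsB, if_neg h.not_gt, if_pos h]; ring

lemma rhsR_of_gR_pos {α β p r x y : ℝ} (h : 0 < gR α β p r x y) :
    rhsR α β p r x y = 1 - y := by
  rw [rhsR, if_pos h, if_neg h.not_gt]; ring

namespace IsWSSolutionOn

variable {α β p r : ℝ} {θB θR : ℝ → ℝ}

lemma continuousOn {J : Set ℝ} (hsol : IsWSSolutionOn α β p r θB θR J) :
    ContinuousOn (fun t => (θB t, θR t)) J :=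
  fun t ht => (hsol t ht).1.continuousWithinAt.prodMk (hsol t ht).2.continuousWithinAt

lemma eventually_gB_neg_gR_pos (hsol : IsWSSolutionOn α β p r θB θR (Ici 0)) {x : ℝ}
    (hx : 0 ≤ x) (hB : gB α β p r (θB x) (θR x) < 0) (hR : 0 < gR α β p r (θB x) (θR x)) :
    ∀ᶠ y in 𝓝[≥] x, gB α β p r (θB y) (θR y) < 0 ∧ 0 < gR α β p r (θB y) (θR y) := by
  have hG : Continuous fun q : ℝ × ℝ => (gB α β p r q.1 q.2, gR α β p r q.1 q.2) := by
    unfold gB gR; fun_prop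
  exact (hsol.continuousOn x hx).mono (Ici_subset_Ici.2 hx)
    ((hG.isOpen_preimage _ (isOpen_Iio.prod isOpen_Ioi)).mem_nhds ⟨hB, hR⟩)

lemma eqOn_relax (hsol : IsWSSolutionOn α β p r θB θR (Ici 0)) {a b cB cR : ℝ} (ha : 0 ≤ a)
    (hsigns : ∀ x ∈ Ico a b, gB α β p r (θB x) (θR x) < 0 ∧ 0 < gR α β p r (θB x) (θR x))
    (hB : θB a = relax 0 cB a) (hR : θR a = relax 1 cR a) :
    EqOn θB (relax 0 cB) (Icc a b) ∧ EqOn θR (relax 1 cR) (Icc a b) := by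
  have hIcc : Icc a b ⊆ Ici 0 := fun x hx => ha.trans hx.1
  have hcont := hsol.continuousOn.mono hIcc
  have hderiv (x : ℝ) (hx : x ∈ Ico a b) := (hsol x (hIcc (Ico_subset_Icc_self hx))).imp
    (·.mono (Ici_subset_Ici.2 (ha.trans hx.1))) (·.mono (Ici_subset_Ici.2 (ha.trans hx.1)))
  refine ⟨eqOn_relax_of_hasDerivWithinAt hcont.fst (fun x hx => ?_) hB,
    eqOn_relax_of_hasDerivWithinAt hcont.snd (fun x hx => ?_) hR⟩
  · simpa only [rhsB_of_gB_neg (hsigns x hx).1, zero_sub] using (hderiv x hx).1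
  · simpa only [rhsR_of_gR_pos (hsigns x hx).2] using (hderiv x hx).2

lemma eq_relax_of_case3 (hsol : IsWSSolutionOn α β p r θB θR (Ici 0))
    (hα : 0 ≤ α) (hβ : 0 ≤ β) (hp : 0 ≤ p) (hp1 : p ≤ 1) (hr : 0 ≤ r)
    (hcase1 : α < p * (α + β) * (1 - r)) (hcase2 : p * (α + β) * r < α)
    {c : ℝ} (hc : c < 1 / 2) (h0B : θB 0 = c) (h0R : θR 0 = c) {t : ℝ} (ht : 0 ≤ t) :
    θB t = relax 0 c t ∧ θR t = relax 1 c t := by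
  set E := {t | θB t = relax 0 c t ∧ θR t = relax 1 c t}
  have hstep (x : ℝ) (hxE : x ∈ E) (hx : 0 ≤ x) : E ∈ 𝓝[≥] x := by
    obtain ⟨hxB, hxR⟩ := hxE
    have hlt : θB x < 1 / 2 := hxB ▸ relax_zero_lt_half hc hx
    have hle : θB x ≤ θR x := hxB ▸ hxR ▸ relax_zero_le_relax_one hx
    obtain ⟨u, hxu, hu⟩ := mem_nhdsGE_iff_exists_Ico_subset.1 <|
      hsol.eventually_gB_neg_gR_pos hx (gB_neg_of_lt_half_of_le hβ hp hr hcase2 hlt hle)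
        (gR_pos_of_lt_half_of_le hα hp hp1 hr hcase1 hlt hle)
    obtain ⟨hB, hR⟩ := hsol.eqOn_relax hx hu hxB hxR
    exact mem_of_superset (Icc_mem_nhdsGE hxu) fun y hy => ⟨hB hy, hR hy⟩
  have hclosed : IsClosed (E ∩ Icc 0 t) := by
    have hcont := (hsol.continuousOn.mono (Icc_subset_Ici_self : Icc 0 t ⊆ Ici 0)).sub
      ((continuous_relax 0 c).prodMk (continuous_relax 1 c)).continuousOn
    convert hcont.preimage_isClosed_of_isClosed isClosed_Icc
      (isClosed_singleton (x := (0 : ℝ × ℝ))) using 1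
    ext y
    simp [E, Prod.ext_iff, sub_eq_zero, and_comm]
  refine hclosed.Icc_subset_of_forall_mem_nhdsWithin ⟨?_, ?_⟩ (fun x hx => ?_) ⟨ht, le_rfl⟩
  · rw [h0B, relax_zero]
  · rw [h0R, relax_zero]
  · exact nhdsWithin_mono _ Ioi_subset_Ici_self (hstep x hx.1 hx.2.1)

end IsWSSolutionOn

theorem ws_case3_polarization_low_general
    (α β p r : ℝ)
    (hα : α ∈ Set.Icc (0:ℝ) 1) (hβ : β ∈ Set.Icc (0:ℝ) 1)
    (hp : p ∈ Set.Icc (0:ℝ) 1) (hr : r ∈ Set.Ioo (0:ℝ) 1)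
    (hcase1 : α < p * (α + β) * (1 - r)) (hcase2 : p * (α + β) * r < α)
    (c : ℝ) (hc2 : c < 1 / 2)
    (θB θR : ℝ → ℝ)
    (hsol : IsWSSolutionOn α β p r θB θR (Set.Ici 0))
    (h0B : θB 0 = c) (h0R : θR 0 = c) :
    Filter.Tendsto (fun t => (θB t, θR t)) Filter.atTop (nhds (((0:ℝ), (1:ℝ)))) := by
  have h : ∀ᶠ t in atTop, θB t = relax 0 c t ∧ θR t = relax 1 c t :=
    (eventually_ge_atTop 0).mono fun _ ht =>
      hsol.eq_relax_of_case3 hα.1 hβ.1 hp.1 hp.2 hr.1.le hcase1 hcase2 hc2 h0B h0R ht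
  exact ((tendsto_relax_atTop 0 c).congr' (h.mono fun _ ht => ht.1.symm)).prodMk_nhds
    ((tendsto_relax_atTop 1 c).congr' (h.mono fun _ ht => ht.2.symm))

/-- Under the Case-3 condition p(α+β)(1−r) > α and p(α+β)r < α, with θ^B(0)=θ^R(0)=c and 0 ≤ c < 1/2, every solution on [0,∞) converges to the party-line polarized state (0,1). -/
theorem ws_case3_polarization_low
    (α β p r : ℝ)
    (hα : α ∈ Set.Icc (0:ℝ) 1) (hβ : β ∈ Set.Icc (0:ℝ) 1)
    (hp : p ∈ Set.Icc (0:ℝ) 1) (hr : r ∈ Set.Ioo (0:ℝ) 1)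
    (hcase1 : α < p * (α + β) * (1 - r)) (hcase2 : p * (α + β) * r < α)
    (c : ℝ) (hc1 : 0 ≤ c) (hc2 : c < 1 / 2)
    (θB θR : ℝ → ℝ)
    (hsol : IsWSSolutionOn α β p r θB θR (Set.Ici 0))
    (h0B : θB 0 = c) (h0R : θR 0 = c) :
    Filter.Tendsto (fun t => (θB t, θR t)) Filter.atTop (nhds (((0:ℝ), (1:ℝ)))) :=
  ws_case3_polarization_low_general α β p r hα hβ hp hr hcase1 hcase2 c hc2 θB θR hsol h0B h0R
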